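/- arXiv:2403.08955 — 2 statements merged into one kernel-verified Lean document; each statement's English description precedes it below -/
import Mathlib

section
/- Descent-type recursion for risk-sensitive gradient ascent: suppose J : ℝ^d → ℝ is L-smooth with supremum J* = sup J < ∞, and an update θ_{t+1} = θ_t + η g_t is performed where the deterministic vector g_t satisfies ⟨∇J(θ_t), g_t⟩ = ‖∇J(θ_t)‖² and ‖g_t‖² ≤ 2A(J* − J(θ_t)) + B‖∇J(θ_t)‖² + C with A, B, C ≥ 0 and 0 < η, 1 − LBη/2 > 0. Then for each t: (J* − J(θ_{t+1})) + η(1 − LBη/2)‖∇J(θ_t)‖² ≤ (1 + Lη²A)(J* − J(θ_t)) + LCη²/2. -/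
open RealInnerProductSpace

open intervalIntegral in
lemma descent_aux {d : ℕ} (L : ℝ) (hL : 0 ≤ L)
    (J : EuclideanSpace ℝ (Fin d) → ℝ) (g : EuclideanSpace ℝ (Fin d) → EuclideanSpace ℝ (Fin d))
    (hgrad : ∀ θ, HasGradientAt J (g θ) θ)
    (hLip : ∀ θ θ', ‖g θ - g θ'‖ ≤ L * ‖θ - θ'‖)
    (θ v : EuclideanSpace ℝ (Fin d)) :
    J θ + ⟪g θ, v⟫ - L / 2 * ‖v‖ ^ 2 ≤ J (θ + v) := by
  have hgc : Continuous g := by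
    have : LipschitzWith (Real.toNNReal L) g := by
      apply LipschitzWith.of_dist_le_mul
      intro x y
      simpa [dist_eq_norm, Real.coe_toNNReal L hL] using hLip x y
    exact this.continuous
  have hφ : ∀ s : ℝ, HasDerivAt (fun s : ℝ => J (θ + s • v)) ⟪g (θ + s • v), v⟫ s := by
    intro s
    have h1 : HasDerivAt (fun s : ℝ => θ + s • v) v s := by
      simpa using ((hasDerivAt_id s).smul_const v).const_add θ
    have h2 := ((hgrad (θ + s • v)).hasFDerivAt).comp_hasDerivAt s h1
    have h3 : HasDerivAt (fun s : ℝ => J (θ + s • v)) ((InnerProductSpace.toDual ℝ _ (g (θ + s • v))) v) s := h2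
    simpa using h3
  have hcont : Continuous fun s : ℝ => ⟪g (θ + s • v), v⟫ := by
    exact (hgc.comp (continuous_const.add (continuous_id.smul continuous_const))).inner continuous_const
  have heq : J (θ + v) - J θ = ∫ s in (0:ℝ)..1, ⟪g (θ + s • v), v⟫ := by
    have := integral_eq_sub_of_hasDerivAt (f := fun s : ℝ => J (θ + s • v))
      (fun s _ => hφ s) (hcont.intervalIntegrable 0 1)
    simpa using this.symm
  have hmono : ∫ s in (0:ℝ)..1, (⟪g θ, v⟫ - L * ‖v‖ ^ 2 * s) ≤ ∫ s in (0:ℝ)..1, ⟪g (θ + s • v), v⟫ := by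
    apply integral_mono_on (by norm_num)
    · exact ((continuous_const.sub ((continuous_const.mul continuous_id))).intervalIntegrable 0 1)
    · exact hcont.intervalIntegrable 0 1
    · intro s hs
      have h1 : |⟪g (θ + s • v) - g θ, v⟫| ≤ ‖g (θ + s • v) - g θ‖ * ‖v‖ :=
        abs_real_inner_le_norm _ _
      have h2 : ‖g (θ + s • v) - g θ‖ ≤ L * (s * ‖v‖) := by
        have := hLip (θ + s • v) θ
        simpa [norm_smul, abs_of_nonneg hs.1] using this
      have h3 : ⟪g (θ + s • v), v⟫ = ⟪g θ, v⟫ + ⟪g (θ + s • v) - g θ, v⟫ := by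
        rw [inner_sub_left]; ring
      have h4 : ‖g (θ + s • v) - g θ‖ * ‖v‖ ≤ L * (s * ‖v‖) * ‖v‖ :=
        mul_le_mul_of_nonneg_right h2 (norm_nonneg v)
      have h5 := (abs_le.mp h1).1
      rw [h3]
      nlinarith [norm_nonneg v]
  have hval : ∫ s in (0:ℝ)..1, (⟪g θ, v⟫ - L * ‖v‖ ^ 2 * s) = ⟪g θ, v⟫ - L * ‖v‖ ^ 2 / 2 := by
    have : (fun s : ℝ => ⟪g θ, v⟫ - L * ‖v‖ ^ 2 * s) = fun s : ℝ => ⟪g θ, v⟫ - L * ‖v‖ ^ 2 * s := rfl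
    rw [intervalIntegral.integral_sub (f := fun _ : ℝ => ⟪g θ, v⟫) (g := fun s : ℝ => L * ‖v‖ ^ 2 * s) (intervalIntegrable_const)
      (((continuous_const.mul continuous_id').intervalIntegrable 0 1 : IntervalIntegrable (fun s : ℝ => L * ‖v‖ ^ 2 * s) _ 0 1))]
    rw [intervalIntegral.integral_const_mul]
    simp [integral_id]
    ring
  rw [hval] at hmono
  linarith [heq ▸ hmono]

theorem descent_recursion_step (d : ℕ) (hd : 0 < d) (L A B C η Jstar : ℝ)
    (hL : 0 ≤ L) (hA : 0 ≤ A) (hB : 0 ≤ B) (hC : 0 ≤ C) (hη : 0 < η)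
    (hstep : 1 - L * B * η / 2 > 0)
    (J : EuclideanSpace ℝ (Fin d) → ℝ) (g : EuclideanSpace ℝ (Fin d) → EuclideanSpace ℝ (Fin d))
    (hgrad : ∀ θ, HasGradientAt J (g θ) θ)
    (hLip : ∀ θ θ', ‖g θ - g θ'‖ ≤ L * ‖θ - θ'‖)
    (hub : ∀ θ, J θ ≤ Jstar)
    (θt gt : EuclideanSpace ℝ (Fin d))
    (hinner : ⟪g θt, gt⟫ = ‖g θt‖ ^ 2)
    (hnorm : ‖gt‖ ^ 2 ≤ 2 * A * (Jstar - J θt) + B * ‖g θt‖ ^ 2 + C) :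
    (Jstar - J (θt + η • gt)) + η * (1 - L * B * η / 2) * ‖g θt‖ ^ 2 ≤
      (1 + L * η ^ 2 * A) * (Jstar - J θt) + L * C * η ^ 2 / 2 := by

  have hdesc := descent_aux L hL J g hgrad hLip θt (η • gt)
  rw [real_inner_smul_right, hinner] at hdesc
  have hns : ‖η • gt‖ ^ 2 = η ^ 2 * ‖gt‖ ^ 2 := by
    rw [norm_smul]; simp [abs_of_pos hη]; ring
  rw [hns] at hdesc
  have hmul := mul_le_mul_of_nonneg_left hnorm (show (0:ℝ) ≤ L * η ^ 2 / 2 by positivity)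
  nlinarith [hub θt, hub (θt + η • gt)]
end

section
/- Combining the recursion: under the hypotheses of the previous descent recursion (deterministic version), for every T ≥ 1, min_{0 ≤ t ≤ T-1} ‖∇J(θ_t)‖² ≤ 2δ₀(1 + Lη²A)^T / (ηT(2 − LBη)) + LCη/(2 − LBη), where δ₀ = J* − J(θ₀). -/
/-!
Along the segment from `x` to `x + v`, an `L`-Lipschitz gradient makes
`s ↦ J (x + s • v) - s ⟪∇J x, v⟫ + s² L ‖v‖² / 2` nondecreasing, which is the descent lemma
`J (x + v) ≥ J x + ⟪∇J x, v⟫ - L ‖v‖² / 2`. Applied to one step `v = η g_t` together with the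
bounds on `g_t`, it gives, for the gap `δ_t = J* - J θ_t`,
`c ‖∇J θ_t‖² ≤ ρ δ_t - δ_{t+1} + K` with `ρ = 1 + L η² A`, `c = η (2 - L B η) / 2` and
`K = L C η² / 2`. Dividing the `t`-th inequality by `ρ^(t+1)` makes the sum telescope, so
`c ∑_{t<T} ‖∇J θ_t‖² / ρ^(t+1) ≤ δ_0 + K ∑_{t<T} ρ^-(t+1)`; bounding the weighted average of
the `‖∇J θ_t‖²` below by their minimum and the weight sum below by `T / ρ^T` gives the claim.
-/

open RealInnerProductSpace Finset

section Descent

variable {E : Type*} [NormedAddCommGroup E] [InnerProductSpace ℝ E] [CompleteSpace E]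

theorem HasGradientAt.hasDerivAt_comp_add_smul {J : E → ℝ} {x v w : E} {s : ℝ}
    (h : HasGradientAt J w (x + s • v)) :
    HasDerivAt (fun s : ℝ => J (x + s • v)) ⟪w, v⟫ s := by
  have hline : HasDerivAt (fun s : ℝ => x + s • v) v s := by
    simpa using ((hasDerivAt_id s).smul_const v).const_add x
  simpa [InnerProductSpace.toDual_apply_apply, Function.comp_def] using
    h.hasFDerivAt.comp_hasDerivAt s hline

variable {J : E → ℝ} {g : E → E} {L : ℝ}

theorem le_apply_add_of_lipschitz_gradient (hgrad : ∀ x, HasGradientAt J (g x) x)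
    (hLip : ∀ x y, ‖g x - g y‖ ≤ L * ‖x - y‖) (x v : E) :
    J x + ⟪g x, v⟫ - L / 2 * ‖v‖ ^ 2 ≤ J (x + v) := by
  set ψ : ℝ → ℝ := fun s => J (x + s • v) - s * ⟪g x, v⟫ + s ^ 2 * (L / 2 * ‖v‖ ^ 2)
  have hψ : ∀ s : ℝ, HasDerivAt ψ
      (⟪g (x + s • v), v⟫ - ⟪g x, v⟫ + 2 * s * (L / 2 * ‖v‖ ^ 2)) s := fun s => by
    refine (((hgrad (x + s • v)).hasDerivAt_comp_add_smul.sub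
      ((hasDerivAt_id s).mul_const ⟪g x, v⟫)).add
      ((hasDerivAt_pow 2 s).mul_const (L / 2 * ‖v‖ ^ 2))).congr_deriv ?_
    push_cast
    ring
  have hmono : MonotoneOn ψ (Set.Ici 0) := by
    refine monotoneOn_of_deriv_nonneg (convex_Ici 0)
      (Differentiable.continuous fun s => (hψ s).differentiableAt).continuousOn
      (fun s _ => (hψ s).differentiableAt.differentiableWithinAt) fun s hs => ?_
    rw [interior_Ici, Set.mem_Ioi] at hs
    have hdist : ‖x - (x + s • v)‖ = s * ‖v‖ := by
      rw [sub_add_cancel_left, norm_neg, norm_smul, Real.norm_of_nonneg hs.le]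
    have hinner : ⟪g x - g (x + s • v), v⟫ ≤ L * (s * ‖v‖) * ‖v‖ :=
      (real_inner_le_norm _ _).trans <| mul_le_mul_of_nonneg_right
        (hdist ▸ hLip _ _) (norm_nonneg v)
    rw [inner_sub_left] at hinner
    rw [(hψ s).deriv]
    linarith
  have hψ01 := hmono Set.self_mem_Ici (Set.mem_Ici.mpr zero_le_one) zero_le_one
  simp only [ψ, zero_smul, add_zero, one_smul, zero_mul, zero_pow two_ne_zero, one_mul,
    one_pow, sub_zero] at hψ01
  linarith

theorem descent_step {A B C η Jstar : ℝ} (hL : 0 ≤ L)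
    (hgrad : ∀ x, HasGradientAt J (g x) x) (hLip : ∀ x y, ‖g x - g y‖ ≤ L * ‖x - y‖)
    {x u : E} (hinner : ⟪g x, u⟫ = ‖g x‖ ^ 2)
    (hnorm : ‖u‖ ^ 2 ≤ 2 * A * (Jstar - J x) + B * ‖g x‖ ^ 2 + C) :
    η * (2 - L * B * η) / 2 * ‖g x‖ ^ 2 ≤
      (1 + L * η ^ 2 * A) * (Jstar - J x) - (Jstar - J (x + η • u)) + L * C * η ^ 2 / 2 := by
  have hdescent := le_apply_add_of_lipschitz_gradient hgrad hLip x (η • u)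
  rw [real_inner_smul_right, hinner, norm_smul, mul_pow, Real.norm_eq_abs, sq_abs] at hdescent
  linarith [mul_le_mul_of_nonneg_left hnorm (by positivity : 0 ≤ L * η ^ 2 / 2)]

end Descent

section Recursion

variable {ρ c K : ℝ} {δ a : ℕ → ℝ}

theorem sum_div_pow_le_of_le_mul_sub_add (hρ : 0 < ρ)
    (h : ∀ t, c * a t ≤ ρ * δ t - δ (t + 1) + K) (n : ℕ) :
    δ n / ρ ^ n + c * ∑ t ∈ range n, a t / ρ ^ (t + 1) ≤
      δ 0 + K * ∑ t ∈ range n, 1 / ρ ^ (t + 1) := by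
  induction n with
  | zero => simp
  | succ n ih =>
    have hstep : δ (n + 1) / ρ ^ (n + 1) + c * (a n / ρ ^ (n + 1)) ≤
        δ n / ρ ^ n + K * (1 / ρ ^ (n + 1)) := by
      calc δ (n + 1) / ρ ^ (n + 1) + c * (a n / ρ ^ (n + 1))
          = (δ (n + 1) + c * a n) / ρ ^ (n + 1) := by ring
        _ ≤ (ρ * δ n + K) / ρ ^ (n + 1) :=
          div_le_div_of_nonneg_right (by linarith [h n]) (by positivity)
        _ = δ n / ρ ^ n + K * (1 / ρ ^ (n + 1)) := by rw [pow_succ]; field_simp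
    rw [sum_range_succ, sum_range_succ]
    linarith

theorem le_sum_one_div_pow (hρ : 1 ≤ ρ) (T : ℕ) :
    T / ρ ^ T ≤ ∑ t ∈ range T, 1 / ρ ^ (t + 1) := by
  calc (T : ℝ) / ρ ^ T = ∑ _t ∈ range T, 1 / ρ ^ T := by
        rw [sum_const, card_range, nsmul_eq_mul, mul_one_div]
    _ ≤ ∑ t ∈ range T, 1 / ρ ^ (t + 1) := sum_le_sum fun t ht =>
      one_div_le_one_div_of_le (by positivity) (pow_le_pow_right₀ hρ (mem_range.mp ht))

theorem inf'_le_of_le_mul_sub_add (hρ : 1 ≤ ρ) (hc : 0 < c) (hδ : ∀ t, 0 ≤ δ t)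
    (h : ∀ t, c * a t ≤ ρ * δ t - δ (t + 1) + K) {T : ℕ} (hT : (range T).Nonempty) :
    (range T).inf' hT a ≤ δ 0 * ρ ^ T / (c * T) + K / c := by
  set m := (range T).inf' hT a
  set S := ∑ t ∈ range T, 1 / ρ ^ (t + 1)
  have hρ₀ : 0 < ρ := by linarith
  have hT₀ : (0 : ℝ) < T := Nat.cast_pos.mpr (Nat.pos_of_ne_zero (nonempty_range_iff.mp hT))
  have hS : T / ρ ^ T ≤ S := le_sum_one_div_pow hρ T
  have hS₀ : 0 < S := lt_of_lt_of_le (by positivity) hS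
  have hmS : m * S ≤ ∑ t ∈ range T, a t / ρ ^ (t + 1) := by
    rw [mul_sum]
    exact sum_le_sum fun t ht => by
      rw [mul_one_div]
      exact div_le_div_of_nonneg_right (inf'_le a ht) (by positivity)
  have hsum := sum_div_pow_le_of_le_mul_sub_add hρ₀ h T
  have hδT : 0 ≤ δ T / ρ ^ T := div_nonneg (hδ T) (by positivity)
  have hmain : m * (c * S) ≤ δ 0 + K * S := by
    linarith [mul_le_mul_of_nonneg_left hmS hc.le]
  calc m ≤ δ 0 / (c * S) + K / c := by
        rwa [← le_div_iff₀ (by positivity), add_div, mul_div_mul_right _ _ hS₀.ne'] at hmain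
    _ ≤ δ 0 / (c * (T / ρ ^ T)) + K / c := by
        gcongr
        exact hδ 0
    _ = δ 0 * ρ ^ T / (c * T) + K / c := by
        field_simp

end Recursion

theorem min_grad_norm_bound (d : ℕ) (L A B C η Jstar : ℝ)
    (hL : 0 ≤ L) (hA : 0 ≤ A) (hη : 0 < η)
    (hstep : 1 - L * B * η / 2 > 0)
    (J : EuclideanSpace ℝ (Fin d) → ℝ) (g : EuclideanSpace ℝ (Fin d) → EuclideanSpace ℝ (Fin d))
    (hgrad : ∀ θ, HasGradientAt J (g θ) θ)
    (hLip : ∀ θ θ', ‖g θ - g θ'‖ ≤ L * ‖θ - θ'‖)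
    (hub : ∀ θ, J θ ≤ Jstar)
    (θ gs : ℕ → EuclideanSpace ℝ (Fin d))
    (hupd : ∀ t : ℕ, θ (t + 1) = θ t + η • gs t)
    (hinner : ∀ t : ℕ, ⟪g (θ t), gs t⟫ = ‖g (θ t)‖ ^ 2)
    (hnorm : ∀ t : ℕ, ‖gs t‖ ^ 2 ≤ 2 * A * (Jstar - J (θ t)) + B * ‖g (θ t)‖ ^ 2 + C) :
    ∀ T : ℕ, (hT : 1 ≤ T) →
      (Finset.range T).inf' (Finset.nonempty_range_iff.mpr (by omega))
          (fun t => ‖g (θ t)‖ ^ 2) ≤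
        2 * (Jstar - J (θ 0)) * (1 + L * η ^ 2 * A) ^ T / (η * T * (2 - L * B * η)) +
          L * C * η / (2 - L * B * η) := by
  intro T hT
  have hρ : 1 ≤ 1 + L * η ^ 2 * A := le_add_of_nonneg_right (by positivity)
  have hgap : 0 < 2 - L * B * η := by linarith
  have hrec (t : ℕ) := hupd t ▸ descent_step (η := η) hL hgrad hLip (hinner t) (hnorm t)
  refine (inf'_le_of_le_mul_sub_add hρ (by positivity) (fun t => sub_nonneg.mpr (hub (θ t)))
    hrec _).trans_eq ?_
  field_simp
end
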